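/- arXiv:1812.02838 — 6 statements merged into one kernel-verified Lean document; each statement's English description precedes it below -/
import Mathlib

section
/- A bounded operator T on a complex Hilbert space H is an n-quasi-m-isometry if and only if the restriction of T to the closure of the range of T^n is an m-isometry, i.e., for all x in the closure of R(T^n), the sum over k from 0 to m of (-1)^{m-k} * binomial(m,k) * ||T^k x||^2 equals 0. -/
variable {H : Type*} [NormedAddCommGroup H] [InnerProductSpace ℂ H] [CompleteSpace H]

/-- `β_m(T) = ∑_{k=0}^m (-1)^{m-k} C(m,k) T^{*k} T^k`. -/
noncomputable def betaOp (T : H →L[ℂ] H) (m : ℕ) : H →L[ℂ] H :=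
  ∑ k ∈ Finset.range (m + 1),
    ((-1 : ℂ) ^ (m - k) * (m.choose k : ℂ)) • ((ContinuousLinearMap.adjoint T) ^ k * T ^ k)

/-- `T` is an `n`-quasi-`m`-isometry if `T^{*n} β_m(T) T^n = 0`. -/
def IsNQuasiMIsometry (T : H →L[ℂ] H) (n m : ℕ) : Prop :=
  (ContinuousLinearMap.adjoint T) ^ n * betaOp T m * T ^ n = 0

/-! Since `⟪T^{*n} β_m(T) T^n y, y⟫ = ⟪β_m(T) T^n y, T^n y⟫` and a complex operator is determined by
its quadratic form, `T` is an `n`-quasi-`m`-isometry exactly when the real quadratic form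
`x ↦ ⟪β_m(T) x, x⟫ = ∑_k (-1)^{m-k} C(m,k) ‖T^k x‖²` vanishes on the range of `T^n`; being
continuous, it then vanishes on the closure of that range. -/

open ContinuousLinearMap

section Adjoint

variable {𝕜 E : Type*} [RCLike 𝕜] [NormedAddCommGroup E] [InnerProductSpace 𝕜 E] [CompleteSpace E]

lemma ContinuousLinearMap.adjoint_pow (T : E →L[𝕜] E) (k : ℕ) : adjoint T ^ k = adjoint (T ^ k) := by
  simp only [← star_eq_adjoint, star_pow]

lemma ContinuousLinearMap.inner_adjoint_mul_mul_apply_self (S A : E →L[𝕜] E) (y : E) :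
    inner 𝕜 ((adjoint S * A * S) y) y = inner 𝕜 (A (S y)) (S y) := by
  rw [mul_apply_eq_comp, mul_apply_eq_comp, adjoint_inner_left]

end Adjoint

noncomputable def betaQuadForm (T : H →L[ℂ] H) (m : ℕ) (x : H) : ℝ :=
  ∑ k ∈ Finset.range (m + 1), (-1 : ℝ) ^ (m - k) * (m.choose k : ℝ) * ‖(T ^ k) x‖ ^ 2

lemma inner_betaOp_apply_self (T : H →L[ℂ] H) (m : ℕ) (x : H) :
    inner ℂ (betaOp T m x) x = betaQuadForm T m x := by
  rw [betaOp, sum_apply, sum_inner, betaQuadForm, Complex.ofReal_sum]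
  refine Finset.sum_congr rfl fun k _ => ?_
  rw [smul_apply, inner_smul_left, mul_apply_eq_comp, adjoint_pow, adjoint_inner_left,
    inner_self_eq_norm_sq_to_K]
  simp [mul_assoc]

lemma isNQuasiMIsometry_iff_betaQuadForm_pow_apply_eq_zero (T : H →L[ℂ] H) (n m : ℕ) :
    IsNQuasiMIsometry T n m ↔ ∀ y, betaQuadForm T m ((T ^ n) y) = 0 := by
  rw [IsNQuasiMIsometry, ← coe_inj, toLinearMap_zero, ← inner_map_self_eq_zero, adjoint_pow]
  simp only [coe_coe, inner_adjoint_mul_mul_apply_self, inner_betaOp_apply_self,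
    Complex.ofReal_eq_zero]

theorem nQuasiMIsometry_iff_mIsometry_on_closure_range_general (T : H →L[ℂ] H) (m n : ℕ) :
    IsNQuasiMIsometry T n m ↔
      ∀ x ∈ closure (Set.range (T ^ n)),
        ∑ k ∈ Finset.range (m + 1),
          (-1 : ℝ) ^ (m - k) * (m.choose k : ℝ) * ‖(T ^ k) x‖ ^ 2 = 0 := by
  have hclosed : IsClosed {x | betaQuadForm T m x = 0} :=
    isClosed_eq (by unfold betaQuadForm; fun_prop) continuous_const
  exact (isNQuasiMIsometry_iff_betaQuadForm_pow_apply_eq_zero T n m).trans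
    (Set.range_subset_iff.symm.trans hclosed.closure_subset_iff.symm)

theorem nQuasiMIsometry_iff_mIsometry_on_closure_range (T : H →L[ℂ] H) (m n : ℕ)
    (hm : 1 ≤ m) (hn : 1 ≤ n) :
    IsNQuasiMIsometry T n m ↔
      ∀ x ∈ closure (Set.range (T ^ n)),
        ∑ k ∈ Finset.range (m + 1),
          (-1 : ℝ) ^ (m - k) * (m.choose k : ℝ) * ‖(T ^ k) x‖ ^ 2 = 0 :=
  nQuasiMIsometry_iff_mIsometry_on_closure_range_general T m n
end

section
/- If T is an n-quasi-m-isometric operator on a Hilbert space H, then T is an n-quasi-k-isometric operator for every positive integer k ≥ m. -/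
variable {H : Type*} [NormedAddCommGroup H] [InnerProductSpace ℂ H] [CompleteSpace H]

/-!
Writing `L X = T* X T`, the operator `β_m(T)` is `(L - 1)^m` applied to the identity, so
`β_{m+1}(T) = T* β_m(T) T - β_m(T)`. Sandwiching this between `T*^n` and `T^n` shows that
`T*^n β_m(T) T^n = 0` forces `T*^n β_{m+1}(T) T^n = 0`, and induction on `k` finishes.
-/

section BinomialSandwich

variable {R A : Type*} [CommRing R] [Ring A] [Algebra R A]

theorem sum_neg_one_pow_choose_smul_pow_mul_pow (a b : A) (m : ℕ) :
    ∑ k ∈ Finset.range (m + 1), ((-1 : R) ^ (m - k) * (m.choose k : R)) • (a ^ k * b ^ k) =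
      ((LinearMap.mulLeft R a * LinearMap.mulRight R b - 1 : Module.End R A) ^ m) 1 := by
  set L : Module.End R A := LinearMap.mulLeft R a * LinearMap.mulRight R b
  have hpow (k : ℕ) : (L ^ k) 1 = a ^ k * b ^ k := by
    rw [((LinearMap.commute_mulLeft_right a b).mul_pow k), LinearMap.pow_mulLeft,
      LinearMap.pow_mulRight, Module.End.mul_apply, LinearMap.mulRight_apply,
      LinearMap.mulLeft_apply, one_mul]
  have hneg (j : ℕ) (x : A) : ((-1 : Module.End R A) ^ j) x = (-1 : R) ^ j • x := by
    rw [← map_one (algebraMap R (Module.End R A)), ← map_neg, ← map_pow,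
      Module.algebraMap_end_apply]
  rw [sub_eq_add_neg, (Commute.neg_one_right L).add_pow, LinearMap.sum_apply]
  refine Finset.sum_congr rfl fun k _ => ?_
  rw [Module.End.mul_apply, Module.End.mul_apply, hneg, Module.End.natCast_apply, map_smul,
    map_nsmul, hpow, mul_smul, Nat.cast_smul_eq_nsmul]

theorem sum_neg_one_pow_choose_smul_pow_mul_pow_succ (a b : A) (m : ℕ) :
    ∑ k ∈ Finset.range (m + 2), ((-1 : R) ^ (m + 1 - k) * ((m + 1).choose k : R)) •
        (a ^ k * b ^ k) =
      a * (∑ k ∈ Finset.range (m + 1), ((-1 : R) ^ (m - k) * (m.choose k : R)) •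
        (a ^ k * b ^ k)) * b -
      ∑ k ∈ Finset.range (m + 1), ((-1 : R) ^ (m - k) * (m.choose k : R)) •
        (a ^ k * b ^ k) := by
  simp only [sum_neg_one_pow_choose_smul_pow_mul_pow, pow_succ', Module.End.mul_apply,
    LinearMap.sub_apply, Module.End.one_apply, LinearMap.mulLeft_apply,
    LinearMap.mulRight_apply, mul_assoc]

end BinomialSandwich

theorem betaOp_succ (T : H →L[ℂ] H) (m : ℕ) :
    betaOp T (m + 1) = ContinuousLinearMap.adjoint T * betaOp T m * T - betaOp T m :=
  sum_neg_one_pow_choose_smul_pow_mul_pow_succ _ _ m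

theorem IsNQuasiMIsometry.succ {T : H →L[ℂ] H} {n m : ℕ} (hT : IsNQuasiMIsometry T n m) :
    IsNQuasiMIsometry T n (m + 1) := by
  set S := ContinuousLinearMap.adjoint T
  have hshift : S ^ n * (S * betaOp T m * T) * T ^ n = S * (S ^ n * betaOp T m * T ^ n) * T := by
    simp only [← mul_assoc, ← pow_succ, ← pow_succ']
    simp only [mul_assoc, ← pow_succ, ← pow_succ']
  rw [IsNQuasiMIsometry, betaOp_succ, mul_sub, sub_mul, hshift, hT, mul_zero, zero_mul, sub_zero]

theorem nQuasiMIsometry_of_le_general (T : H →L[ℂ] H) (m n k : ℕ)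
    (hk : m ≤ k) (hT : IsNQuasiMIsometry T n m) : IsNQuasiMIsometry T n k := by
  induction k, hk using Nat.le_induction with
  | base => exact hT
  | succ k _ ih => exact ih.succ

theorem nQuasiMIsometry_of_le (T : H →L[ℂ] H) (m n k : ℕ) (hm : 1 ≤ m) (hn : 1 ≤ n)
    (hk : m ≤ k) (hT : IsNQuasiMIsometry T n m) : IsNQuasiMIsometry T n k :=
  nQuasiMIsometry_of_le_general T m n k hk hT
end

section
/- Let T be an n-quasi-m-isometric operator with n ≥ 2. If the kernel of T^* equals the kernel of T^{*2}, then T is a quasi-m-isometry (i.e., a 1-quasi-m-isometry). -/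
variable {H : Type*} [NormedAddCommGroup H] [InnerProductSpace ℂ H] [CompleteSpace H]

/-!
Since `ker T* = ker T*²`, an identity `T*^n X = 0` already forces `T* X = 0`. Cancelling
this way turns `T*^n β T^n = 0` into `T* β T^n = 0`; taking adjoints (`β = β_m(T)` is
self-adjoint) gives `T*^n β T = 0`, and cancelling once more gives `T* β T = 0`.
-/

theorem mul_eq_zero_of_pow_mul_eq_zero {M : Type*} [MonoidWithZero M] {a : M}
    (ha : ∀ x, a ^ 2 * x = 0 → a * x = 0) {k : ℕ} (hk : k ≠ 0) {x : M} (hx : a ^ k * x = 0) :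
    a * x = 0 := by
  induction k generalizing x with
  | zero => exact absurd rfl hk
  | succ k ih =>
    rcases eq_or_ne k 0 with rfl | hk'
    · simpa using hx
    · have : a * (a * x) = 0 := ih hk' (by rwa [← mul_assoc, ← pow_succ])
      exact ha x (by rwa [sq, mul_assoc])

theorem ContinuousLinearMap.mul_eq_zero_of_sq_mul_eq_zero {R M : Type*} [Semiring R]
    [TopologicalSpace M] [AddCommMonoid M] [Module R M] {A : M →L[R] M}
    (hA : LinearMap.ker (A : M →ₗ[R] M) = LinearMap.ker ((A ^ 2 : M →L[R] M) : M →ₗ[R] M))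
    {X : M →L[R] M} (hX : A ^ 2 * X = 0) : A * X = 0 := by
  ext x
  have hx : X x ∈ LinearMap.ker (A : M →ₗ[R] M) := hA ▸ congr($hX x)
  exact hx

theorem isSelfAdjoint_betaOp (T : H →L[ℂ] H) (m : ℕ) : IsSelfAdjoint (betaOp T m) := by
  refine isSelfAdjoint_sum _ fun k _ => .smul ?_ ?_
  · exact_mod_cast IsSelfAdjoint.intCast ((-1) ^ (m - k) * m.choose k : ℤ)
  · simpa [← ContinuousLinearMap.star_eq_adjoint, star_pow] using
      IsSelfAdjoint.star_mul_self (T ^ k)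

theorem quasiMIsometry_of_ker_adjoint_eq_general (T : H →L[ℂ] H) (m n : ℕ) (hn : 2 ≤ n)
    (hT : IsNQuasiMIsometry T n m)
    (hker : LinearMap.ker ((ContinuousLinearMap.adjoint T : H →L[ℂ] H) : H →ₗ[ℂ] H) =
      LinearMap.ker (((ContinuousLinearMap.adjoint T) ^ 2 : H →L[ℂ] H) : H →ₗ[ℂ] H)) :
    IsNQuasiMIsometry T 1 m := by
  unfold IsNQuasiMIsometry at *
  rw [← ContinuousLinearMap.star_eq_adjoint] at *
  have cancel {X : H →L[ℂ] H} (hX : star T ^ n * X = 0) : star T * X = 0 :=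
    mul_eq_zero_of_pow_mul_eq_zero
      (fun _ => ContinuousLinearMap.mul_eq_zero_of_sq_mul_eq_zero hker) (by omega) hX
  have h₁ : star T * betaOp T m * T ^ n = 0 := by
    simpa only [mul_assoc] using
      cancel (X := betaOp T m * T ^ n) (by simpa only [mul_assoc] using hT)
  have h₂ : star T ^ n * betaOp T m * T = 0 := by
    simpa [star_mul, star_pow, (isSelfAdjoint_betaOp T m).star_eq, mul_assoc] using congr(star $h₁)
  simpa only [pow_one, mul_assoc] using cancel (by simpa only [mul_assoc] using h₂)

theorem quasiMIsometry_of_ker_adjoint_eq (T : H →L[ℂ] H) (m n : ℕ) (hm : 1 ≤ m) (hn : 2 ≤ n)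
    (hT : IsNQuasiMIsometry T n m)
    (hker : LinearMap.ker ((ContinuousLinearMap.adjoint T : H →L[ℂ] H) : H →ₗ[ℂ] H) =
      LinearMap.ker (((ContinuousLinearMap.adjoint T) ^ 2 : H →L[ℂ] H) : H →ₗ[ℂ] H)) :
    IsNQuasiMIsometry T 1 m :=
  quasiMIsometry_of_ker_adjoint_eq_general T m n hn hT hker
end

section
/- If T is an n-quasi-m-isometric operator, then T^k is an n-quasi-m-isometric operator for every positive integer k. -/
/-!
Put `f s = T*^s T^s`. Then `T^{*n} β_m(T) T^n` is the `m`-th forward difference `Δ^m f (n)`, and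
`f (s + 1) = T* f(s) T`, so once `Δ^m f` vanishes at `n` it vanishes at every `t ≥ n`. On the other
hand the sequence attached to `T^k` is `s ↦ f (k s)`, whose `m`-th difference at `n` is the `m`-th
difference of `f` with step `k` at `k n ≥ n`. It remains to see that if the step-`1` differences of
order `m` vanish on `[n, ∞)`, so do the step-`k` ones: `Δ^(m-1) f` is constant on `[n, ∞)`, and the
step-`k` and step-`1` difference operators commute.
-/

variable {H : Type*} [NormedAddCommGroup H] [InnerProductSpace ℂ H] [CompleteSpace H]

section fwdDiff

variable {M G : Type*} [AddCommMonoid M] [AddCommGroup G]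

theorem fwdDiff_commute (a b : M) : Function.Commute (fwdDiff (G := G) a) (fwdDiff b) := by
  intro f
  funext t
  simp only [fwdDiff, add_right_comm t a b]
  abel

theorem fwdDiff_iter_add_of_map_add (φ : G →+ G) {f : M → G} {a : M}
    (hf : ∀ s, f (s + a) = φ (f s)) (h : M) (m : ℕ) (y : M) :
    (fwdDiff h)^[m] f (y + a) = φ ((fwdDiff h)^[m] f y) := by
  simp only [fwdDiff_iter_eq_sum_shift, map_sum, map_zsmul, ← hf, add_right_comm y]

end fwdDiff

theorem fwdDiff_iter_comp_mul_left {R G : Type*} [Semiring R] [AddCommGroup G] (f : R → G)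
    (k h : R) (m : ℕ) (y : R) :
    (fwdDiff h)^[m] (fun s ↦ f (k * s)) y = (fwdDiff (k * h))^[m] f (k * y) := by
  simp only [fwdDiff_iter_eq_sum_shift, mul_add, mul_smul_comm]

section NatFwdDiff

variable {G : Type*} [AddCommGroup G]

theorem fwdDiff_iter_eq_zero_of_map_succ (φ : G →+ G) {f : ℕ → G} (hf : ∀ s, f (s + 1) = φ (f s))
    {h m n : ℕ} (hn : (fwdDiff h)^[m] f n = 0) {t : ℕ} (ht : n ≤ t) : (fwdDiff h)^[m] f t = 0 := by
  induction t, ht using Nat.le_induction with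
  | base => exact hn
  | succ t _ ih => rw [fwdDiff_iter_add_of_map_add φ hf, ih, map_zero]

theorem fwdDiff_eq_zero_of_fwdDiff_one_eq_zero {g : ℕ → G} {n : ℕ}
    (hg : ∀ t, n ≤ t → fwdDiff 1 g t = 0) (k : ℕ) {t : ℕ} (ht : n ≤ t) : fwdDiff k g t = 0 := by
  induction k with
  | zero => simp [fwdDiff]
  | succ k ih =>
    have hsplit : fwdDiff (k + 1) g t = fwdDiff 1 g (t + k) + fwdDiff k g t := by
      simp only [fwdDiff, ← add_assoc]
      abel
    rw [hsplit, hg _ (ht.trans (Nat.le_add_right t k)), ih, add_zero]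

theorem fwdDiff_iter_eq_zero_of_fwdDiff_one_iter_eq_zero {m n : ℕ} {f : ℕ → G}
    (hf : ∀ t, n ≤ t → (fwdDiff 1)^[m] f t = 0) (k : ℕ) {t : ℕ} (ht : n ≤ t) :
    (fwdDiff k)^[m] f t = 0 := by
  induction m generalizing f with
  | zero => exact hf t ht
  | succ m ih =>
    rw [Function.iterate_succ_apply]
    refine ih (fun s hs ↦ ?_)
    rw [(fwdDiff_commute 1 k).iterate_left m f]
    refine fwdDiff_eq_zero_of_fwdDiff_one_eq_zero (fun s hs ↦ ?_) k hs
    rw [← Function.iterate_succ_apply' (fwdDiff 1)]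
    exact hf s hs

end NatFwdDiff

theorem adjoint_pow_mul_betaOp_mul_pow (T : H →L[ℂ] H) (n m : ℕ) :
    (ContinuousLinearMap.adjoint T) ^ n * betaOp T m * T ^ n =
      (fwdDiff 1)^[m] (fun s ↦ (ContinuousLinearMap.adjoint T) ^ s * T ^ s) n := by
  rw [betaOp, Finset.mul_sum, Finset.sum_mul, fwdDiff_iter_eq_sum_shift]
  refine Finset.sum_congr rfl fun j _ ↦ ?_
  rw [mul_smul_comm, smul_mul_assoc, ← Int.cast_smul_eq_zsmul ℂ, smul_eq_mul, mul_one]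
  push_cast
  congr 1
  rw [pow_add, pow_add, pow_mul_comm T, mul_assoc, mul_assoc, mul_assoc]

theorem isNQuasiMIsometry_iff_fwdDiff (T : H →L[ℂ] H) (n m : ℕ) :
    IsNQuasiMIsometry T n m ↔
      (fwdDiff 1)^[m] (fun s ↦ (ContinuousLinearMap.adjoint T) ^ s * T ^ s) n = 0 := by
  rw [IsNQuasiMIsometry, adjoint_pow_mul_betaOp_mul_pow]

theorem nQuasiMIsometry_pow_general (T : H →L[ℂ] H) (m n : ℕ)
    (hT : IsNQuasiMIsometry T n m) :
    ∀ k : ℕ, 1 ≤ k → IsNQuasiMIsometry (T ^ k) n m := by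
  intro k hk
  set f : ℕ → H →L[ℂ] H := fun s ↦ (ContinuousLinearMap.adjoint T) ^ s * T ^ s
  have hconj : ∀ s, f (s + 1) =
      (AddMonoidHom.mulLeft (ContinuousLinearMap.adjoint T)).comp (AddMonoidHom.mulRight T) (f s) :=
    fun s ↦ by simp only [f, pow_succ', pow_mul_comm' T, mul_assoc, AddMonoidHom.coe_comp,
      Function.comp_apply, AddMonoidHom.coe_mulRight, AddMonoidHom.coe_mulLeft]
  have hvanish : ∀ t, n ≤ t → (fwdDiff 1)^[m] f t = 0 := fun t ht ↦
    fwdDiff_iter_eq_zero_of_map_succ _ hconj ((isNQuasiMIsometry_iff_fwdDiff T n m).1 hT) ht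
  have hadj : ContinuousLinearMap.adjoint (T ^ k) = (ContinuousLinearMap.adjoint T) ^ k := by
    simp only [← ContinuousLinearMap.star_eq_adjoint, star_pow]
  rw [isNQuasiMIsometry_iff_fwdDiff, hadj]
  simp only [← pow_mul]
  rw [fwdDiff_iter_comp_mul_left f, mul_one]
  exact fwdDiff_iter_eq_zero_of_fwdDiff_one_iter_eq_zero hvanish k (Nat.le_mul_of_pos_left n hk)

theorem nQuasiMIsometry_pow (T : H →L[ℂ] H) (m n : ℕ) (hm : 1 ≤ m) (hn : 1 ≤ n)
    (hT : IsNQuasiMIsometry T n m) :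
    ∀ k : ℕ, 1 ≤ k → IsNQuasiMIsometry (T ^ k) n m :=
  nQuasiMIsometry_pow_general T m n hT
end

section
/- Let T and S be doubly commuting bounded operators on a Hilbert space (TS = ST and T^*S = ST^*). If T is an n1-quasi-m-isometry and S is an n2-quasi-l-isometry, then TS is an n0-quasi-(m+l-1)-isometry, where n0 = max(n1, n2). -/
variable {H : Type*} [NormedAddCommGroup H] [InnerProductSpace ℂ H] [CompleteSpace H]

/-!
Put `F_T k = T^{*k} T^k`. The `j`-th forward difference of `F_T` at `y` is `T^{*y} β_j(T) T^y`,
so `T` is an `n`-quasi-`m`-isometry iff `Δ^m F_T (n) = 0`, and this persists for larger `m` and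
`n`. Double commutation makes `F_{TS} = F_T F_S`, and the discrete Leibniz rule writes
`Δ^{m+l-1} (F_T F_S) (n)` as a combination of the products `Δ^j F_T (n + i) · Δ^i F_S (n)` with
`i + j = m + l - 1`, in each of which `j ≥ m` or `i ≥ l`.
-/

open Finset ContinuousLinearMap
open scoped fwdDiff

section Leibniz

variable {M R : Type*} [AddCommMonoid M] [Ring R] (h : M)

lemma fwdDiff_mul_apply (f g : M → R) (y : M) :
    Δ_[h] (fun x ↦ f x * g x) y = Δ_[h] f y * g y + f (y + h) * Δ_[h] g y := by
  simp only [fwdDiff]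
  noncomm_ring

theorem fwdDiff_iter_mul_apply (n : ℕ) (f g : M → R) (y : M) :
    (Δ_[h])^[n] (fun x ↦ f x * g x) y =
      ∑ ij ∈ antidiagonal n,
        n.choose ij.1 • ((Δ_[h])^[ij.2] f (y + ij.1 • h) * (Δ_[h])^[ij.1] g y) := by
  induction n generalizing f g with
  | zero => simp
  | succ n ih =>
    have hstep : Δ_[h] (fun x ↦ f x * g x) =
        (fun x ↦ Δ_[h] f x * g x) + fun x ↦ f (x + h) * Δ_[h] g x :=
      funext (fwdDiff_mul_apply h f g)
    rw [Function.iterate_succ_apply, hstep, fwdDiff_iter_add, Pi.add_apply, ih, ih,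
      sum_antidiagonal_choose_succ_nsmul
        (fun i j ↦ (Δ_[h])^[j] f (y + i • h) * (Δ_[h])^[i] g y) n]
    congr 1
    refine sum_congr rfl fun ⟨i, j⟩ hij ↦ ?_
    rw [n.choose_symm_of_eq_add (mem_antidiagonal.1 hij).symm, fwdDiff_iter_comp_add, succ_nsmul,
      add_assoc]
    rfl

end Leibniz

theorem Commute.star_pow_mul_pow_mul {R : Type*} [Monoid R] [StarMul R] {a b : R}
    (hab : Commute a b) (hab' : Commute (star a) b) (k : ℕ) :
    star (a * b) ^ k * (a * b) ^ k = (star a ^ k * a ^ k) * (star b ^ k * b ^ k) := by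
  have hba : Commute (star b) (star a) := hab.star_star.symm
  have hb'a : Commute (star b) a := by simpa using hab'.star_star.symm
  have hmid : Commute (star b ^ k) (star a ^ k * a ^ k) :=
    (hba.pow_pow k k).mul_right (hb'a.pow_pow k k)
  calc star (a * b) ^ k * (a * b) ^ k = star b ^ k * (star a ^ k * a ^ k) * b ^ k := by
        rw [star_mul, hba.mul_pow, hab.mul_pow]
        simp only [mul_assoc]
    _ = (star a ^ k * a ^ k) * (star b ^ k * b ^ k) := by rw [hmid.eq, mul_assoc]

theorem fwdDiff_iter_adjoint_pow_mul_pow (T : H →L[ℂ] H) (m n : ℕ) :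
    (Δ_[1])^[m] (fun k ↦ adjoint T ^ k * T ^ k) n = adjoint T ^ n * betaOp T m * T ^ n := by
  rw [fwdDiff_iter_eq_sum_shift, betaOp, mul_sum, sum_mul]
  refine sum_congr rfl fun k _ ↦ ?_
  rw [smul_eq_mul, mul_one, pow_add, pow_add, (Commute.pow_pow_self T n k).eq,
    ← Int.cast_smul_eq_zsmul ℂ, mul_smul_comm, smul_mul_assoc]
  push_cast
  simp only [mul_assoc]

theorem isNQuasiMIsometry_iff_fwdDiff_iter (T : H →L[ℂ] H) (n m : ℕ) :
    IsNQuasiMIsometry T n m ↔ (Δ_[1])^[m] (fun k ↦ adjoint T ^ k * T ^ k) n = 0 := by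
  rw [fwdDiff_iter_adjoint_pow_mul_pow, IsNQuasiMIsometry]

namespace IsNQuasiMIsometry

variable {T : H →L[ℂ] H} {n m : ℕ}

theorem mono_left (hT : IsNQuasiMIsometry T n m) {n' : ℕ} (h : n ≤ n') :
    IsNQuasiMIsometry T n' m := by
  obtain ⟨b, rfl⟩ := Nat.exists_eq_add_of_le h
  calc adjoint T ^ (n + b) * betaOp T m * T ^ (n + b)
      = adjoint T ^ b * (adjoint T ^ n * betaOp T m * T ^ n) * T ^ b := by
        rw [pow_add, pow_add, (Commute.pow_pow_self (adjoint T) n b).eq]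
        simp only [mul_assoc]
    _ = 0 := by rw [hT, mul_zero, zero_mul]

theorem succ_right (hT : IsNQuasiMIsometry T n m) : IsNQuasiMIsometry T n (m + 1) := by
  have hT' := hT.mono_left n.le_succ
  rw [isNQuasiMIsometry_iff_fwdDiff_iter] at hT hT' ⊢
  rw [Function.iterate_succ_apply', fwdDiff, hT, hT', sub_zero]

theorem mono (hT : IsNQuasiMIsometry T n m) {n' m' : ℕ} (hn : n ≤ n') (hm : m ≤ m') :
    IsNQuasiMIsometry T n' m' := by
  induction m', hm using Nat.le_induction with
  | base => exact hT.mono_left hn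
  | succ m' _ ih => exact ih.succ_right

end IsNQuasiMIsometry

theorem product_doubly_commuting_nQuasiMIsometry_general (T S : H →L[ℂ] H) (m l n₁ n₂ : ℕ)
    (hc : T * S = S * T) (hc' : ContinuousLinearMap.adjoint T * S = S * ContinuousLinearMap.adjoint T)
    (hT : IsNQuasiMIsometry T n₁ m) (hS : IsNQuasiMIsometry S n₂ l) :
    IsNQuasiMIsometry (T * S) (max n₁ n₂) (m + l - 1) := by
  have hprod : (fun k ↦ adjoint (T * S) ^ k * (T * S) ^ k) =
      fun k ↦ (adjoint T ^ k * T ^ k) * (adjoint S ^ k * S ^ k) := by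
    funext k
    simpa only [star_eq_adjoint] using
      Commute.star_pow_mul_pow_mul hc (by rwa [star_eq_adjoint]) k
  rw [isNQuasiMIsometry_iff_fwdDiff_iter, hprod, fwdDiff_iter_mul_apply]
  refine sum_eq_zero fun ⟨i, j⟩ hij ↦ ?_
  replace hij : i + j = m + l - 1 := Finset.HasAntidiagonal.mem_antidiagonal.1 hij
  dsimp only
  rcases lt_or_ge i l with hi | hi
  · have hTj : IsNQuasiMIsometry T (max n₁ n₂ + i • 1) j :=
      hT.mono ((le_max_left n₁ n₂).trans (Nat.le_add_right _ _)) (by omega)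
    rw [(isNQuasiMIsometry_iff_fwdDiff_iter ..).1 hTj, zero_mul, smul_zero]
  · rw [(isNQuasiMIsometry_iff_fwdDiff_iter ..).1 (hS.mono (le_max_right n₁ n₂) hi), mul_zero,
      smul_zero]

theorem product_doubly_commuting_nQuasiMIsometry (T S : H →L[ℂ] H) (m l n₁ n₂ : ℕ)
    (hm : 1 ≤ m) (hl : 1 ≤ l) (hn₁ : 1 ≤ n₁) (hn₂ : 1 ≤ n₂)
    (hc : T * S = S * T) (hc' : ContinuousLinearMap.adjoint T * S = S * ContinuousLinearMap.adjoint T)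
    (hT : IsNQuasiMIsometry T n₁ m) (hS : IsNQuasiMIsometry S n₂ l) :
    IsNQuasiMIsometry (T * S) (max n₁ n₂) (m + l - 1) :=
  product_doubly_commuting_nQuasiMIsometry_general T S m l n₁ n₂ hc hc' hT hS
end

section
/- Let T and S be doubly commuting operators such that T is an n1-quasi-m-isometry and S is an n2-quasi-l-isometry. Then for all positive integers p and q, T^p S^q is a max(n1,n2)-quasi-(m+l-1)-isometry. -/
variable {H : Type*} [NormedAddCommGroup H] [InnerProductSpace ℂ H] [CompleteSpace H]

/-!
Write `Φ_T X = T* X T`. Then `β_m(T) = (Φ_T - 1)^m 1`, so `T` is an `n`-quasi-`m`-isometry exactly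
when `Φ_T^n (Φ_T - 1)^m` kills `1`, and for commuting `T`, `S` the operators `Φ_T`, `Φ_S` commute
and `Φ_{T^p S^q} = Φ_T^p Φ_S^q`. The theorem thus reduces to a statement about the commutative ring
generated by `u = Φ_T` and `v = Φ_S`: with `w = u^p v^q` and `N ≥ n₁, n₂`, the element
`w^N (w - 1)^(m+l-1)` lies in the ideal generated by `u^n₁ (u - 1)^m` and `v^n₂ (v - 1)^l`.
This follows from `w - 1 = v^q (u^p - 1) + (v^q - 1)`, because `w^N (v^q (u^p - 1))^m` is a
multiple of `u^n₁ (u - 1)^m` and `w^N (v^q - 1)^l` a multiple of `v^n₂ (v - 1)^l`.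
-/

section CommRing

variable {R : Type*} [CommRing R]

theorem pow_mul_sub_one_pow_dvd_pow_pow_mul_pow_sub_one_pow (u : R) (m : ℕ) {n N p : ℕ}
    (hp : 1 ≤ p) (hn : n ≤ N) : u ^ n * (u - 1) ^ m ∣ (u ^ p) ^ N * (u ^ p - 1) ^ m := by
  rw [← pow_mul]
  exact mul_dvd_mul (pow_dvd_pow u (hn.trans (Nat.le_mul_of_pos_left N hp)))
    (pow_dvd_pow_of_dvd (sub_one_dvd_pow_sub_one u p) m)

theorem pow_mul_pow_mul_sub_one_pow_mem_span (u v : R) {m l n₁ n₂ p q N : ℕ}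
    (hp : 1 ≤ p) (hq : 1 ≤ q) (h₁ : n₁ ≤ N) (h₂ : n₂ ≤ N) :
    (u ^ p * v ^ q) ^ N * (u ^ p * v ^ q - 1) ^ (m + l - 1) ∈
      Ideal.span {u ^ n₁ * (u - 1) ^ m, v ^ n₂ * (v - 1) ^ l} := by
  set I := Ideal.span {u ^ n₁ * (u - 1) ^ m, v ^ n₂ * (v - 1) ^ l}
  have hu : (v ^ q * (u ^ p - 1)) ^ m ∈ I.colon {(u ^ p * v ^ q) ^ N} := by
    refine Submodule.mem_colon_singleton.2
      (I.mem_of_dvd ?_ (Ideal.subset_span (Set.mem_insert _ _)))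
    exact (pow_mul_sub_one_pow_dvd_pow_pow_mul_pow_sub_one_pow u m hp h₁).trans
      (Dvd.intro ((v ^ q) ^ m * (v ^ q) ^ N) (by rw [mul_pow]; ring))
  have hv : (v ^ q - 1) ^ l ∈ I.colon {(u ^ p * v ^ q) ^ N} := by
    refine Submodule.mem_colon_singleton.2
      (I.mem_of_dvd ?_ (Ideal.subset_span (Set.mem_insert_of_mem _ rfl)))
    exact (pow_mul_sub_one_pow_dvd_pow_pow_mul_pow_sub_one_pow v l hq h₂).trans
      (Dvd.intro ((u ^ p) ^ N) (by ring))
  have hw : u ^ p * v ^ q - 1 = v ^ q * (u ^ p - 1) + (v ^ q - 1) := by ring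
  simpa only [hw, smul_eq_mul, mul_comm] using
    Submodule.mem_colon_singleton.1 (Ideal.add_pow_add_pred_mem_of_pow_mem _ hu hv)

end CommRing

open scoped IsMulCommutative in
theorem Commute.exists_pow_mul_pow_mul_sub_one_pow_eq {A : Type*} [Ring A] {u v : A}
    (huv : Commute u v) {m l n₁ n₂ p q N : ℕ}
    (hp : 1 ≤ p) (hq : 1 ≤ q) (h₁ : n₁ ≤ N) (h₂ : n₂ ≤ N) :
    ∃ c d : A, (u ^ p * v ^ q) ^ N * (u ^ p * v ^ q - 1) ^ (m + l - 1) =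
      c * (u ^ n₁ * (u - 1) ^ m) + d * (v ^ n₂ * (v - 1) ^ l) := by
  have := Subring.isMulCommutative_closure (s := {u, v}) (by
    simp only [Set.mem_insert_iff, Set.mem_singleton_iff]
    rintro x (rfl | rfl) y (rfl | rfl) <;> first | rfl | exact huv.eq | exact huv.eq.symm)
  obtain ⟨c, d, hcd⟩ := Ideal.mem_span_pair.1 <| pow_mul_pow_mul_sub_one_pow_mem_span
    (⟨u, Subring.subset_closure (by simp)⟩ : Subring.closure {u, v})
    ⟨v, Subring.subset_closure (by simp)⟩ (m := m) (l := l) hp hq h₁ h₂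
  exact ⟨c, d, by simpa using congrArg Subtype.val hcd.symm⟩

namespace LinearMap

variable {R A : Type*} [CommSemiring R] [Semiring A] [Algebra R A]

theorem mulLeftRight_mul_mulLeftRight (a b c d : A) :
    mulLeftRight R (a, b) * mulLeftRight R (c, d) = mulLeftRight R (a * c, d * b) := by
  ext x
  simp [mul_assoc]

theorem mulLeftRight_pow (a b : A) (n : ℕ) :
    mulLeftRight R (a, b) ^ n = mulLeftRight R (a ^ n, b ^ n) := by
  induction n with
  | zero => ext x; simp
  | succ n ih => rw [pow_succ, ih, mulLeftRight_mul_mulLeftRight, pow_succ, pow_succ']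

theorem commute_mulLeftRight {a b c d : A} (hac : Commute a c) (hbd : Commute b d) :
    Commute (mulLeftRight R (a, b)) (mulLeftRight R (c, d)) := by
  rw [Commute, SemiconjBy, mulLeftRight_mul_mulLeftRight, mulLeftRight_mul_mulLeftRight,
    hac.eq, hbd.eq]

end LinearMap

theorem sub_one_pow_eq_sum_smul {R A : Type*} [CommRing R] [Ring A] [Algebra R A] (a : A)
    (m : ℕ) : (a - 1) ^ m =
      ∑ k ∈ Finset.range (m + 1), ((-1 : R) ^ (m - k) * (m.choose k : R)) • a ^ k := by
  rw [sub_eq_add_neg, (Commute.neg_one_right a).add_pow]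
  refine Finset.sum_congr rfl fun k _ => ?_
  rw [Algebra.smul_def, map_mul, map_pow, map_neg, map_one, map_natCast, mul_assoc]
  exact (((Commute.neg_one_left _).pow_left _).mul_left (Nat.cast_commute _ _)).eq.symm

open ContinuousLinearMap (adjoint star_eq_adjoint)
open LinearMap (mulLeftRight mulLeftRight_apply mulLeftRight_pow mulLeftRight_mul_mulLeftRight
  commute_mulLeftRight)

noncomputable def adjointMulLeftRight (T : H →L[ℂ] H) : Module.End ℂ (H →L[ℂ] H) :=
  mulLeftRight ℂ (adjoint T, T)

theorem adjointMulLeftRight_pow (T : H →L[ℂ] H) (n : ℕ) :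
    adjointMulLeftRight T ^ n = mulLeftRight ℂ (adjoint T ^ n, T ^ n) :=
  mulLeftRight_pow _ _ n

theorem betaOp_eq_adjointMulLeftRight_sub_one_pow (T : H →L[ℂ] H) (m : ℕ) :
    betaOp T m = ((adjointMulLeftRight T - 1) ^ m) 1 := by
  simp [sub_one_pow_eq_sum_smul (R := ℂ), betaOp, adjointMulLeftRight_pow]

theorem isNQuasiMIsometry_iff (T : H →L[ℂ] H) (n m : ℕ) :
    IsNQuasiMIsometry T n m ↔
      (adjointMulLeftRight T ^ n * (adjointMulLeftRight T - 1) ^ m) 1 = 0 := by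
  rw [IsNQuasiMIsometry, Module.End.mul_apply, ← betaOp_eq_adjointMulLeftRight_sub_one_pow,
    adjointMulLeftRight_pow, mulLeftRight_apply]

theorem Commute.adjoint_adjoint {T S : H →L[ℂ] H} (h : Commute T S) :
    Commute (adjoint T) (adjoint S) := by
  simpa only [← star_eq_adjoint] using h.star_star

theorem Commute.commute_adjointMulLeftRight {T S : H →L[ℂ] H} (h : Commute T S) :
    Commute (adjointMulLeftRight T) (adjointMulLeftRight S) :=
  commute_mulLeftRight h.adjoint_adjoint h

theorem Commute.adjointMulLeftRight_pow_mul_pow {T S : H →L[ℂ] H} (h : Commute T S) (p q : ℕ) :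
    adjointMulLeftRight (T ^ p * S ^ q) =
      adjointMulLeftRight T ^ p * adjointMulLeftRight S ^ q := by
  rw [adjointMulLeftRight_pow, adjointMulLeftRight_pow, mulLeftRight_mul_mulLeftRight,
    adjointMulLeftRight, ← star_eq_adjoint, star_mul, star_pow, star_pow, star_eq_adjoint,
    star_eq_adjoint, (h.adjoint_adjoint.pow_pow p q).eq, (h.pow_pow p q).eq]

theorem power_product_doubly_commuting_nQuasiMIsometry_general (T S : H →L[ℂ] H) (m l n₁ n₂ : ℕ)
    (hc : T * S = S * T)
    (hT : IsNQuasiMIsometry T n₁ m) (hS : IsNQuasiMIsometry S n₂ l) :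
    ∀ p q : ℕ, 1 ≤ p → 1 ≤ q →
      IsNQuasiMIsometry (T ^ p * S ^ q) (max n₁ n₂) (m + l - 1) := by
  intro p q hp hq
  have hTS : Commute T S := hc
  obtain ⟨c, d, hcd⟩ := hTS.commute_adjointMulLeftRight.exists_pow_mul_pow_mul_sub_one_pow_eq
    (m := m) (l := l) hp hq (le_max_left n₁ n₂) (le_max_right n₁ n₂)
  rw [isNQuasiMIsometry_iff] at hT hS ⊢
  rw [hTS.adjointMulLeftRight_pow_mul_pow, hcd, LinearMap.add_apply, Module.End.mul_apply c,
    Module.End.mul_apply d, hT, hS, map_zero, map_zero, add_zero]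

theorem power_product_doubly_commuting_nQuasiMIsometry (T S : H →L[ℂ] H) (m l n₁ n₂ : ℕ)
    (hm : 1 ≤ m) (hl : 1 ≤ l) (hn₁ : 1 ≤ n₁) (hn₂ : 1 ≤ n₂)
    (hc : T * S = S * T) (hc' : ContinuousLinearMap.adjoint T * S = S * ContinuousLinearMap.adjoint T)
    (hT : IsNQuasiMIsometry T n₁ m) (hS : IsNQuasiMIsometry S n₂ l) :
    ∀ p q : ℕ, 1 ≤ p → 1 ≤ q →
      IsNQuasiMIsometry (T ^ p * S ^ q) (max n₁ n₂) (m + l - 1) :=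
  power_product_doubly_commuting_nQuasiMIsometry_general T S m l n₁ n₂ hc hT hS
end
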